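/- arXiv:1609.00947 — 5 statements merged into one kernel-verified Lean document; each statement's English description precedes it below -/
import Mathlib

section
/- Let R be a commutative ring and let {I_α}_{α∈A} be a family of finitely generated ideals of R such that every minimal prime ideal of R contains I_α for some α ∈ A. Then there exists a finite subset {α_1, …, α_n} ⊆ A such that every minimal prime ideal of R contains I_{α_i} for some i. (This expresses that the minimal spectrum Min(R) is quasi-compact with respect to the flat (Hochster inverse) topology, whose basic open sets are the sets V(I) = {p ∈ Spec(R) : I ⊆ p} for I a finitely generated ideal.) -/
/-- The minimal spectrum is quasi-compact in the flat (Hochster inverse) topology: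
if a family of finitely generated ideals is such that every minimal prime contains
some member of the family, then a finite subfamily already suffices. -/
theorem minimalSpectrum_flat_quasiCompact {R : Type*} [CommRing R] {A : Type*}
    (I : A → Ideal R) (hfg : ∀ a, (I a).FG)
    (hcov : ∀ p ∈ minimalPrimes R, ∃ a, I a ≤ p) :
    ∃ s : Finset A, ∀ p ∈ minimalPrimes R, ∃ a ∈ s, I a ≤ p := by
  by_contra hcon
  push_neg at hcon
  -- choose, for each finite set s, a minimal prime avoiding all I a, a ∈ s
  choose p hpmin hp using hcon
  have hprime : ∀ s : Finset A, (p s).IsPrime := fun s => (hpmin s).1.1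
  -- an ultrafilter extending atTop on Finset A
  let U : Ultrafilter (Finset A) := Ultrafilter.of Filter.atTop
  have hU : (U : Filter (Finset A)) ≤ Filter.atTop := Ultrafilter.of_le _
  -- the limit ideal
  let q : Ideal R :=
    { carrier := {x | {s | x ∈ p s} ∈ U}
      zero_mem' := by
        have : {s : Finset A | (0 : R) ∈ p s} = Set.univ := by
          ext s; simp [(p s).zero_mem]
        rw [Set.mem_setOf_eq] at *
        simp only [this]
        exact Filter.univ_mem
      add_mem' := by
        intro x y hx hy
        refine U.toFilter.mem_of_superset (Filter.inter_mem hx hy) ?_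
        rintro s ⟨h1, h2⟩
        exact (p s).add_mem h1 h2
      smul_mem' := by
        intro c x hx
        refine U.toFilter.mem_of_superset hx ?_
        intro s hs
        exact (p s).smul_mem c hs }
  have hqprime : q.IsPrime := by
    constructor
    · intro h1
      have h1' : {s : Finset A | (1 : R) ∈ p s} ∈ U := (Ideal.eq_top_iff_one q).mp h1
      have : {s : Finset A | (1 : R) ∈ p s} = ∅ := by
        ext s; simp [(hprime s).ne_top, Ideal.eq_top_iff_one (p s)]
        intro h; exact (hprime s).ne_top ((Ideal.eq_top_iff_one (p s)).mpr h)
      rw [this] at h1'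
      exact Filter.empty_notMem (U : Filter (Finset A)) h1'
    · intro x y hxy
      have hxy' : {s : Finset A | x * y ∈ p s} ∈ U := hxy
      have hsub : {s : Finset A | x * y ∈ p s} ⊆
          {s | x ∈ p s} ∪ {s | y ∈ p s} := by
        intro s hs
        rcases (hprime s).mem_or_mem hs with h | h
        · exact Or.inl h
        · exact Or.inr h
      have := U.toFilter.mem_of_superset hxy' hsub
      rcases (Ultrafilter.union_mem_iff (f := U)).mp this with h | h
      · exact Or.inl h
      · exact Or.inr h
  -- a minimal prime below q
  obtain ⟨m, hm, hmq⟩ := Ideal.exists_minimalPrimes_le (bot_le : (⊥ : Ideal R) ≤ q)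
  obtain ⟨a, ha⟩ := hcov m hm
  obtain ⟨T, hT⟩ := hfg a
  -- each generator is in q
  have hgen : ∀ x ∈ T, {s : Finset A | x ∈ p s} ∈ U := by
    intro x hx
    have : x ∈ q := hmq (ha (hT ▸ Ideal.subset_span hx))
    exact this
  have hall : {s : Finset A | ∀ x ∈ T, x ∈ p s} ∈ U := by
    have : (⋂ x ∈ T, {s : Finset A | x ∈ p s}) ∈ U :=
      (Filter.biInter_finset_mem T).mpr hgen
    refine U.toFilter.mem_of_superset this ?_
    intro s hs x hx
    exact Set.mem_iInter₂.mp hs x hx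
  have hIci : {s : Finset A | ({a} : Finset A) ⊆ s} ∈ U := by
    have : Set.Ici ({a} : Finset A) ∈ (Filter.atTop : Filter (Finset A)) :=
      Filter.Ici_mem_atTop _
    exact hU this
  obtain ⟨s, hs1, hs2⟩ := Filter.nonempty_of_mem (Filter.inter_mem hall hIci)
  have hle : I a ≤ p s := by
    rw [← hT, Ideal.span_le]
    intro x hx
    exact hs1 x hx
  exact hp s a (hs2 (Finset.mem_singleton_self a)) hle
end

section
/- Let R be a commutative ring such that for every minimal prime p of R there exists a finitely generated ideal I ⊆ p with the property that p is the unique minimal prime of R containing I (i.e., {p} = Min(R) ∩ V(I)). Then R has only finitely many minimal prime ideals. -/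
/-!
Every prime contains a minimal prime `p`, hence the ideal `I p`, so the closed sets `V(I p)` cover
`Spec R`. Since `I p` is finitely generated, `V(I p)` is the complement of a quasi-compact open,
hence open in the constructible topology, in which `Spec R` is still quasi-compact. A finite
subcover `V(I p₁), …, V(I pₙ)` then catches every minimal prime `q`, and `I pᵢ ≤ q` forces
`q = pᵢ`.
-/

open PrimeSpectrum Topology

lemma PrimeSpectrum.isOpen_constructibleTopology_zeroLocus {R : Type*} [CommRing R]
    {I : Ideal R} (hI : I.FG) :
    IsOpen[constructibleTopology (PrimeSpectrum R)] (zeroLocus (I : Set R)) :=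
  IsCompact.isOpen_constructibleTopology_of_isClosed
    (isCompact_isOpen_iff_ideal.mpr ⟨I, hI, rfl⟩).1 (isClosed_zeroLocus _)

theorem Ideal.exists_finset_forall_isPrime_exists_le_of_fg {R ι : Type*} [CommRing R]
    (I : ι → Ideal R) (hI : ∀ i, (I i).FG) (hcover : ∀ p : Ideal R, p.IsPrime → ∃ i, I i ≤ p) :
    ∃ t : Finset ι, ∀ p : Ideal R, p.IsPrime → ∃ i ∈ t, I i ≤ p := by
  let X := WithConstructibleTopology (PrimeSpectrum R)
  obtain ⟨t, ht⟩ := (isCompact_univ (X := X)).elim_finite_subcover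
    (fun i => WithTopology.ofTopology ⁻¹' zeroLocus (I i : Set R))
    (fun i => WithConstructibleTopology.isOpen_iff.mpr
      (isOpen_constructibleTopology_zeroLocus (hI i)))
    (fun x _ => by simpa using hcover _ (WithTopology.ofTopology x).isPrime)
  refine ⟨t, fun p hp => ?_⟩
  simpa using ht (Set.mem_univ (WithTopology.toTopology _ ⟨p, hp⟩))

/-- If every minimal prime `p` of `R` contains a finitely generated ideal `I`
such that `p` is the unique minimal prime containing `I`, then `R` has only
finitely many minimal primes. -/
theorem minimalPrimes_finite_of_fg_separating {R : Type*} [CommRing R]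
    (h : ∀ p ∈ minimalPrimes R, ∃ I : Ideal R, I.FG ∧ I ≤ p ∧
      ∀ q ∈ minimalPrimes R, I ≤ q → q = p) :
    (minimalPrimes R).Finite := by
  choose I hIfg hIle hIuniq using h
  have hcover (q : Ideal R) (hq : q.IsPrime) : ∃ p : minimalPrimes R, I p p.2 ≤ q := by
    obtain ⟨p, hp, hpq⟩ := Ideal.exists_minimalPrimes_le (I := ⊥) (J := q) bot_le
    exact ⟨⟨p, hp⟩, (hIle p hp).trans hpq⟩
  obtain ⟨t, ht⟩ := Ideal.exists_finset_forall_isPrime_exists_le_of_fg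
    (fun p : minimalPrimes R => I p p.2) (fun p => hIfg p p.2) hcover
  refine (t.finite_toSet.image Subtype.val).subset fun q hq => ?_
  obtain ⟨p, hpt, hpq⟩ := ht q hq.1.1
  exact ⟨p, hpt, (hIuniq p p.2 q hq hpq).symm⟩
end

section
/- Let R be a commutative ring such that every minimal prime ideal of R is the radical of a finitely generated ideal. Then R has only finitely many minimal prime ideals. -/
/-!
The prime spectrum is compact in the constructible topology, where the zero locus of a finitely
generated ideal is open. Writing each minimal prime `p` as the radical of a finitely generated
ideal `I p`, the zero loci `V(I p)` cover `Spec R`, because every prime contains a minimal one;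
so finitely many of them suffice. A minimal prime `q` lying in `V(I p)` contains `p`, hence equals
it, so the finitely many `p` of the subcover are all the minimal primes.
-/

open Topology

namespace PrimeSpectrum

variable {R : Type*} [CommSemiring R]

lemma isOpen_constructibleTopology_zeroLocus_s4 {I : Ideal R} (hI : I.FG) :
    IsOpen[constructibleTopology (PrimeSpectrum R)] (zeroLocus I) :=
  IsCompact.isOpen_constructibleTopology_of_isClosed
    (isCompact_isOpen_iff_ideal.mpr ⟨I, hI, rfl⟩).1 (isClosed_zeroLocus _)

lemma exists_finset_forall_exists_le_of_fg {ι : Type*} (I : ι → Ideal R)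
    (hI : ∀ i, (I i).FG) (hcover : ∀ x : PrimeSpectrum R, ∃ i, I i ≤ x.asIdeal) :
    ∃ s : Finset ι, ∀ x : PrimeSpectrum R, ∃ i ∈ s, I i ≤ x.asIdeal := by
  obtain ⟨s, hs⟩ :=
    (isCompact_univ (X := WithConstructibleTopology (PrimeSpectrum R))).elim_finite_subcover
      (fun i ↦ WithTopology.ofTopology ⁻¹' zeroLocus (I i))
      (fun i ↦ (WithTopology.isOpen_iff _).mpr (isOpen_constructibleTopology_zeroLocus_s4 (hI i)))
      (fun x _ ↦ by simpa [mem_zeroLocus] using hcover (WithTopology.ofTopology x))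
  exact ⟨s, fun x ↦ by simpa [mem_zeroLocus] using hs (Set.mem_univ (WithTopology.toTopology _ x))⟩

end PrimeSpectrum

/-- If every minimal prime of `R` is the radical of a finitely generated ideal,
then `R` has only finitely many minimal primes. -/
theorem minimalPrimes_finite_of_radical_fg {R : Type*} [CommRing R]
    (h : ∀ p ∈ minimalPrimes R, ∃ I : Ideal R, I.FG ∧ I.radical = p) :
    (minimalPrimes R).Finite := by
  choose I hfg hrad using h
  have hcover (x : PrimeSpectrum R) : ∃ p : minimalPrimes R, I p p.2 ≤ x.asIdeal := by
    obtain ⟨p, hp, hpx⟩ := Ideal.exists_minimalPrimes_le (bot_le (a := x.asIdeal))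
    exact ⟨⟨p, hp⟩, (hrad p hp ▸ Ideal.le_radical).trans hpx⟩
  obtain ⟨s, hs⟩ :=
    PrimeSpectrum.exists_finset_forall_exists_le_of_fg (fun p : minimalPrimes R ↦ I p p.2)
      (fun p ↦ hfg p p.2) hcover
  refine (s.finite_toSet.image Subtype.val).subset fun q hq ↦ ?_
  obtain ⟨p, hps, hIpq⟩ := hs ⟨q, hq.1.1⟩
  have hpq : p.1 ≤ q := hrad p p.2 ▸ hq.1.1.radical_le_iff.mpr hIpq
  exact ⟨p, hps, le_antisymm hpq (hq.2 p.2.1 hpq)⟩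
end

section
/- Let R be a commutative ring such that for every maximal ideal m of R there exists f ∈ R \ m with the property that m is the unique maximal ideal of R not containing f (i.e., {m} = Max(R) ∩ D(f)). Then R has only finitely many maximal ideals. -/
/-- If for every maximal ideal `m` of `R` there is an `f ∉ m` such that `m` is
the unique maximal ideal not containing `f`, then `R` has only finitely many
maximal ideals. -/
theorem maximals_finite_of_separating {R : Type*} [CommRing R]
    (h : ∀ m : Ideal R, m.IsMaximal → ∃ f : R, f ∉ m ∧
      ∀ m' : Ideal R, m'.IsMaximal → f ∉ m' → m' = m) :
    {I : Ideal R | I.IsMaximal}.Finite := by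
  classical
  choose f hf hf' using h
  set S : Set R := ⋃ (m : Ideal R) (hm : m.IsMaximal), {f m hm} with hS
  have hspan : Ideal.span S = ⊤ := by
    by_contra hne
    obtain ⟨m, hm, hle⟩ := Ideal.exists_le_maximal _ hne
    exact hf m hm (hle (Ideal.subset_span (by
      simp only [hS, Set.mem_iUnion, Set.mem_singleton_iff]
      exact ⟨m, hm, rfl⟩)))
  have h1 : (1 : R) ∈ Ideal.span S := hspan ▸ Submodule.mem_top
  obtain ⟨T, hTS, hT1⟩ := Submodule.mem_span_finite_of_mem_span h1
  -- map each element of T to a maximal ideal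
  let g : R → Ideal R := fun t =>
    if ht : ∃ m : Ideal R, ∃ hm : m.IsMaximal, f m hm = t then ht.choose else ⊥
  refine Set.Finite.subset ((T.finite_toSet).image g) ?_
  intro m' hm'
  have hm' : m'.IsMaximal := hm'
  have key : ∃ t ∈ (T : Set R), t ∉ m' := by
    by_contra hc
    push_neg at hc
    have hle : Ideal.span (T : Set R) ≤ m' := Ideal.span_le.mpr hc
    exact hm'.ne_top ((Ideal.eq_top_iff_one _).mpr (hle hT1))
  obtain ⟨t, htT, htm'⟩ := key
  have htS : t ∈ S := hTS htT
  simp only [hS, Set.mem_iUnion, Set.mem_singleton_iff] at htS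
  obtain ⟨m, hm, hfm⟩ := htS
  have hex : ∃ m : Ideal R, ∃ hm : m.IsMaximal, f m hm = t := ⟨m, hm, hfm.symm⟩
  refine ⟨t, htT, ?_⟩
  have hgt : g t = hex.choose := dif_pos hex
  obtain ⟨hm₀, hfm₀⟩ := hex.choose_spec
  have : m' = hex.choose := hf' _ hm₀ m' hm' (by rwa [hfm₀])
  rw [hgt, this]
end

section
/- Let R be a commutative ring such that for every maximal ideal m of R, the canonical localization map π : R → R_m is injective and makes R_m an R-algebra of finite type. Then R has only finitely many maximal ideals. -/
/-!
Let `m` be maximal. Clearing the denominators of finitely many generators of `R_m` over `R`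
gives one `s ∉ m` with `R_m = R[1/s]`, so for `t ∉ m` the inverse `1/t` equals `b/sⁿ`;
injectivity of `R → R_m` turns this into `b t = sⁿ` in `R`. Choosing `t` in another maximal
ideal `m'` but not in `m` puts `s` in `m'`. So each maximal ideal `m` has an element lying in
all maximal ideals but `m`. These elements generate the unit ideal, hence finitely many of them
do, and a maximal ideal other than the corresponding finitely many would contain all of those.
-/

namespace IsLocalization

variable {R S : Type*} [CommSemiring R] [CommSemiring S] [Algebra R S] (M : Submonoid R)
  [IsLocalization M S] [Algebra.FiniteType R S]

theorem exists_forall_isInteger_pow_smul_of_finiteType :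
    ∃ s ∈ M, ∀ z : S, ∃ n : ℕ, IsInteger R (s ^ n • z) := by
  classical
  obtain ⟨T, hT⟩ := Algebra.FiniteType.out (R := R) (A := S)
  obtain ⟨⟨s, hsM⟩, hs⟩ := exist_integer_multiples_of_finset M T
  refine ⟨s, hsM, fun z => ?_⟩
  induction (hT ▸ Algebra.mem_top : z ∈ Algebra.adjoin R (T : Set S))
    using Algebra.adjoin_induction with
  | mem x hx => exact ⟨1, by simpa using hs x hx⟩
  | algebraMap r => exact ⟨0, r, by simp⟩
  | add x y _ _ hx hy =>
    obtain ⟨n, hn⟩ := hx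
    obtain ⟨k, hk⟩ := hy
    refine ⟨n + k, ?_⟩
    rw [smul_add, pow_add, mul_smul, smul_comm, mul_smul]
    exact isInteger_add (isInteger_smul hn) (isInteger_smul hk)
  | mul x y _ _ hx hy =>
    obtain ⟨n, hn⟩ := hx
    obtain ⟨k, hk⟩ := hy
    exact ⟨n + k, by rw [pow_add, ← smul_mul_smul_comm]; exact isInteger_mul hn hk⟩

theorem exists_forall_dvd_pow_of_finiteType (hinj : Function.Injective (algebraMap R S)) :
    ∃ s ∈ M, ∀ t ∈ M, ∃ n : ℕ, t ∣ s ^ n := by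
  obtain ⟨s, hsM, hs⟩ := exists_forall_isInteger_pow_smul_of_finiteType (S := S) M
  refine ⟨s, hsM, fun t ht => ?_⟩
  obtain ⟨n, b, hb⟩ := hs (mk' S 1 ⟨t, ht⟩)
  refine ⟨n, b, hinj ?_⟩
  rw [map_mul, hb, mul_smul_comm, mk'_spec'_mk, map_one, Algebra.algebraMap_eq_smul_one]

end IsLocalization

theorem Ideal.mem_of_forall_dvd_pow {R : Type*} [CommSemiring R] {P Q : Ideal R} [Q.IsPrime]
    (hQP : ¬ Q ≤ P) {s : R} (hs : ∀ t ∉ P, ∃ n : ℕ, t ∣ s ^ n) : s ∈ Q := by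
  obtain ⟨t, htQ, htP⟩ := Set.not_subset.mp hQP
  obtain ⟨n, hn⟩ := hs t htP
  exact ‹Q.IsPrime›.mem_of_pow_mem n (Q.mem_of_dvd hn htQ)

theorem Ideal.setOf_isMaximal_finite_of_exists_separating {R : Type*} [CommSemiring R]
    (h : ∀ m : Ideal R, m.IsMaximal →
      ∃ s ∉ m, ∀ m' : Ideal R, m'.IsMaximal → m' ≠ m → s ∈ m') :
    {I : Ideal R | I.IsMaximal}.Finite := by
  choose s hs hs' using fun m : {I : Ideal R // I.IsMaximal} => h m.1 m.2
  have hspan : ⨆ m, Ideal.span {s m} = ⊤ := by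
    by_contra hne
    obtain ⟨M, hM, hle⟩ := Ideal.exists_le_maximal _ hne
    exact hs ⟨M, hM⟩ (hle (Ideal.mem_iSup_of_mem ⟨M, hM⟩ (Ideal.mem_span_singleton_self _)))
  obtain ⟨F, hF⟩ := Submodule.exists_finset_of_mem_iSup _ (hspan ▸ Submodule.mem_top : (1 : R) ∈ _)
  refine (F.finite_toSet.image Subtype.val).subset fun M hM => ?_
  by_contra hMF
  have hle : ⨆ i ∈ F, Ideal.span {s i} ≤ M := iSup₂_le fun i hi =>
    (Ideal.span_singleton_le_iff_mem _).2 (hs' i M hM fun hMi => hMF ⟨i, hi, hMi.symm⟩)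
  exact hM.ne_top ((Ideal.eq_top_iff_one _).2 (hle hF))

/-- If for every maximal ideal `m` of `R` the canonical localization map
`R → R_m` is injective and of finite type, then `R` has only finitely many
maximal ideals. -/
theorem maximals_finite_of_localization_injective_finiteType {R : Type*} [CommRing R]
    (h : ∀ (m : Ideal R) (hm : m.IsMaximal),
      haveI := hm.isPrime
      Function.Injective (algebraMap R (Localization.AtPrime m)) ∧
      (algebraMap R (Localization.AtPrime m)).FiniteType) :
    {I : Ideal R | I.IsMaximal}.Finite := by
  refine Ideal.setOf_isMaximal_finite_of_exists_separating fun m hm => ?_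
  have := hm.isPrime
  obtain ⟨hinj, hft⟩ := h m hm
  have := RingHom.finiteType_algebraMap.mp hft
  obtain ⟨s, hs, hdvd⟩ :=
    IsLocalization.exists_forall_dvd_pow_of_finiteType (S := Localization.AtPrime m)
      m.primeCompl hinj
  exact ⟨s, hs, fun m' hm' hne =>
    Ideal.mem_of_forall_dvd_pow (fun hle => hne (hm'.eq_of_le hm.ne_top hle)) hdvd⟩
end
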